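/- arXiv:1910.12904 — 2 statements merged into one kernel-verified Lean document; each statement's English description precedes it below -/
import Mathlib

section
/- Every isotropic subspace of ℝ^{2n} is a Krylov subspace of a skew-Hamiltonian matrix: if L ⊆ ℝ^{2n} is an isotropic subspace of dimension k, then there exist a skew-Hamiltonian matrix H ∈ ℝ^{2n×2n} and a vector x ∈ ℝ^{2n} such that L = span{x, Hx, …, H^{k-1}x}. -/
open Matrix

noncomputable section

/-- The canonical skew-symmetric matrix `J = [[0, I],[-I, 0]]`. -/
def Jmat (n : ℕ) : Matrix (Fin n ⊕ Fin n) (Fin n ⊕ Fin n) ℝ :=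
  Matrix.fromBlocks 0 1 (-1) 0

/-- A matrix `H` is skew-Hamiltonian if `Jᵀ Hᵀ J = H`. -/
def IsSkewHamiltonian {n : ℕ} (H : Matrix (Fin n ⊕ Fin n) (Fin n ⊕ Fin n) ℝ) : Prop :=
  (Jmat n)ᵀ * Hᵀ * Jmat n = H

/-!
Take an orthonormal basis `f₀, …, f_{k-1}` of `L`. It suffices to find a skew-Hamiltonian `H`
with `H fⱼ = fⱼ₊₁` (and `H f_{k-1} = 0`); then `L` is the Krylov space of `H` at `x = f₀`.
Every `J S` with `S` skew-symmetric is skew-Hamiltonian, and a skew-symmetric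
`S` with `S fⱼ = wⱼ` exists (namely `∑ᵢ (wᵢ fᵢᵀ - fᵢ wᵢᵀ)`) as soon as every `wᵢ` is orthogonal
to every `fⱼ`. For `wⱼ = Jᵀ fⱼ₊₁` this orthogonality is exactly the isotropy of `L`.
-/

theorem exists_dotProduct_orthonormal_span_eq {ι : Type*} [Fintype ι] {k : ℕ}
    (L : Submodule ℝ (ι → ℝ)) (hdim : Module.finrank ℝ L = k) :
    ∃ f : Fin k → ι → ℝ,
      (∀ i j, f i ⬝ᵥ f j = if i = j then 1 else 0) ∧ Submodule.span ℝ (Set.range f) = L := by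
  let e : (ι → ℝ) ≃ₗ[ℝ] EuclideanSpace ℝ ι := (WithLp.linearEquiv 2 ℝ (ι → ℝ)).symm
  let L' := L.map (e : (ι → ℝ) →ₗ[ℝ] EuclideanSpace ℝ ι)
  have hdim' : Module.finrank ℝ L' = k := (e.finrank_map_eq L).trans hdim
  let b := (stdOrthonormalBasis ℝ L').reindex (finCongr hdim')
  refine ⟨fun i => WithLp.ofLp (b i : EuclideanSpace ℝ ι), fun i j => ?_, ?_⟩
  · simpa [Submodule.coe_inner, EuclideanSpace.inner_eq_star_dotProduct, eq_comm]
      using orthonormal_iff_ite.mp b.orthonormal j i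
  · have : Set.range (fun i => WithLp.ofLp (b i : EuclideanSpace ℝ ι))
        = (e.symm.toLinearMap ∘ₗ L'.subtype) '' Set.range b := by
      rw [← Set.range_comp]; rfl
    rw [this, Submodule.span_image, ← b.coe_toBasis, b.toBasis.span_eq, Submodule.map_top,
      LinearMap.range_comp, Submodule.range_subtype, Submodule.map_symm_eq_iff]

theorem exists_transpose_eq_neg_mulVec_eq {ι R : Type*} [Fintype ι] [CommRing R] {k : ℕ}
    (f w : Fin k → ι → R) (hf : ∀ i j, f i ⬝ᵥ f j = if i = j then 1 else 0)
    (hw : ∀ i j, w i ⬝ᵥ f j = 0) :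
    ∃ S : Matrix ι ι R, Sᵀ = -S ∧ ∀ j, S *ᵥ f j = w j := by
  refine ⟨∑ i, (vecMulVec (w i) (f i) - vecMulVec (f i) (w i)), ?_, fun j => ?_⟩
  · simp only [transpose_sum, transpose_sub, transpose_vecMulVec, ← Finset.sum_neg_distrib,
      neg_sub]
  · simp only [Matrix.sum_mulVec, sub_mulVec, vecMulVec_mulVec]
    simp [hf, hw]

theorem exists_pow_mulVec_eq_of_mulVec_eq_succ {ι R : Type*} [Fintype ι] [DecidableEq ι]
    [CommSemiring R] {k : ℕ} (H : Matrix ι ι R) (f : Fin k → ι → R)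
    (hf : ∀ (i : Fin k) (h : (i : ℕ) + 1 < k), H *ᵥ f i = f ⟨i + 1, h⟩) :
    ∃ x, ∀ i : Fin k, (H ^ (i : ℕ)) *ᵥ x = f i := by
  cases k with
  | zero => exact ⟨0, fun i => i.elim0⟩
  | succ k =>
    refine ⟨f 0, fun ⟨i, hi⟩ => ?_⟩
    induction i with
    | zero => simp
    | succ i ih =>
      rw [pow_succ', ← mulVec_mulVec, ih (by omega), hf ⟨i, by omega⟩ hi]

theorem Jmat_eq_neg_J (n : ℕ) : Jmat n = -J (Fin n) ℝ := by
  simp [Jmat, J, fromBlocks_neg]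

theorem Jmat_transpose (n : ℕ) : (Jmat n)ᵀ = -Jmat n := by
  simp [Jmat_eq_neg_J]

theorem Jmat_mul_transpose (n : ℕ) : Jmat n * (Jmat n)ᵀ = 1 := by
  simp [Jmat_eq_neg_J, J_squared]

theorem transpose_Jmat_mul (n : ℕ) : (Jmat n)ᵀ * Jmat n = 1 := by
  simp [Jmat_eq_neg_J, J_squared]

theorem isSkewHamiltonian_Jmat_mul {n : ℕ} {S : Matrix (Fin n ⊕ Fin n) (Fin n ⊕ Fin n) ℝ}
    (hS : Sᵀ = -S) : IsSkewHamiltonian (Jmat n * S) := by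
  rw [IsSkewHamiltonian, transpose_mul, hS, Matrix.mul_assoc, Matrix.mul_assoc,
    transpose_Jmat_mul, Matrix.mul_one, Jmat_transpose]
  simp

theorem exists_isSkewHamiltonian_mulVec_eq {n k : ℕ} {L : Submodule ℝ ((Fin n ⊕ Fin n) → ℝ)}
    (hiso : ∀ u ∈ L, ∀ v ∈ L, u ⬝ᵥ (Jmat n *ᵥ v) = 0) (f g : Fin k → (Fin n ⊕ Fin n) → ℝ)
    (hf : ∀ i j, f i ⬝ᵥ f j = if i = j then 1 else 0) (hfL : ∀ i, f i ∈ L) (hgL : ∀ i, g i ∈ L) :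
    ∃ H, IsSkewHamiltonian H ∧ ∀ j, H *ᵥ f j = g j := by
  obtain ⟨S, hS, hSf⟩ :=
      exists_transpose_eq_neg_mulVec_eq f (fun i => (Jmat n)ᵀ *ᵥ g i) hf fun i j => by
    rw [mulVec_transpose, ← dotProduct_mulVec]
    exact hiso _ (hgL i) _ (hfL j)
  refine ⟨Jmat n * S, isSkewHamiltonian_Jmat_mul hS, fun j => ?_⟩
  rw [← mulVec_mulVec, hSf, mulVec_mulVec, Jmat_mul_transpose, one_mulVec]

/-- Every isotropic subspace `L ⊆ ℝ^{2n}` of dimension `k` is the Krylov space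
`span{x, Hx, …, H^{k-1}x}` of some skew-Hamiltonian matrix `H` and vector `x`. -/
theorem isotropic_is_krylov_of_skewHamiltonian {n k : ℕ}
    (L : Submodule ℝ ((Fin n ⊕ Fin n) → ℝ))
    (hiso : ∀ u ∈ L, ∀ v ∈ L, u ⬝ᵥ (Jmat n *ᵥ v) = 0)
    (hdim : Module.finrank ℝ L = k) :
    ∃ (H : Matrix (Fin n ⊕ Fin n) (Fin n ⊕ Fin n) ℝ) (x : (Fin n ⊕ Fin n) → ℝ),
      IsSkewHamiltonian H ∧
      L = Submodule.span ℝ (Set.range fun i : Fin k => (H ^ (i : ℕ)) *ᵥ x) := by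
  obtain ⟨f, hf, hspan⟩ := exists_dotProduct_orthonormal_span_eq L hdim
  have hfL : ∀ i, f i ∈ L := fun i => hspan ▸ Submodule.subset_span (Set.mem_range_self i)
  let shift : Fin k → (Fin n ⊕ Fin n) → ℝ :=
    fun i => if h : (i : ℕ) + 1 < k then f ⟨i + 1, h⟩ else 0
  have hshiftL : ∀ i, shift i ∈ L := fun i => by
    unfold shift; split_ifs
    exacts [hfL _, L.zero_mem]
  obtain ⟨H, hH, hHf⟩ := exists_isSkewHamiltonian_mulVec_eq hiso f shift hf hfL hshiftL
  obtain ⟨x, hx⟩ := exists_pow_mulVec_eq_of_mulVec_eq_succ H f fun i h => by simp [hHf, shift, h]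
  exact ⟨H, x, hH, by rw [funext hx, hspan]⟩
end
end

section
/- Let x_1, …, x_n ∈ ℝ^{2n} be linearly independent vectors spanning a Lagrangian subspace, i.e. x_iᵀ J x_j = 0 for all i, j, set X := [x_1 ⋯ x_n] ∈ ℝ^{2n×n}, and let C ∈ ℝ^{n×n} be any companion matrix (C e_k = e_{k+1} for k = 1, …, n-1, last column arbitrary). Then the matrix H̃ := X C X⁺ + Jᵀ (X C X⁺)ᵀ J is skew-Hamiltonian, satisfies H̃ X = X C, and in particular H̃ x_k = x_{k+1} for all k = 1, …, n-1. -/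
open Matrix

noncomputable section

/-- `X = [x_1 ⋯ x_n] ∈ ℝ^{2n×n}`. -/
def Xfull {n : ℕ} (x : Fin n → (Fin n ⊕ Fin n) → ℝ) :
    Matrix (Fin n ⊕ Fin n) (Fin n) ℝ :=
  Matrix.of fun i j => x j i

/-- The Moore–Penrose pseudoinverse `X⁺ = (Xᵀ X)⁻¹ Xᵀ` of `X`
(for `X` with linearly independent columns). -/
def Xpinv {n : ℕ} (x : Fin n → (Fin n ⊕ Fin n) → ℝ) :
    Matrix (Fin n) (Fin n ⊕ Fin n) ℝ :=
  ((Xfull x)ᵀ * Xfull x)⁻¹ * (Xfull x)ᵀ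

/-- A companion matrix: ones on the subdiagonal, last column arbitrary, zeros elsewhere;
equivalently `C e_k = e_{k+1}` for `k = 1, …, n-1`. -/
def IsCompanion {n : ℕ} (C : Matrix (Fin n) (Fin n) ℝ) : Prop :=
  ∀ k : Fin n, k.1 + 1 < n → ∀ i : Fin n, C i k = if i.1 = k.1 + 1 then 1 else 0

/-- `H̃ = X C X⁺ + Jᵀ (X C X⁺)ᵀ J`. -/
def Htilde {n : ℕ} (x : Fin n → (Fin n ⊕ Fin n) → ℝ) (C : Matrix (Fin n) (Fin n) ℝ) :
    Matrix (Fin n ⊕ Fin n) (Fin n ⊕ Fin n) ℝ :=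
  Xfull x * C * Xpinv x + (Jmat n)ᵀ * (Xfull x * C * Xpinv x)ᵀ * Jmat n

/-!
`A ↦ A + Jᵀ Aᵀ J` is the projection onto skew-Hamiltonian matrices (up to a factor 2), because
`J² = -1`. For `A = X C X⁺` the correction term kills `X`: `Jᵀ (X C X⁺)ᵀ J X` contains the factor
`Xᵀ J X`, which vanishes since the columns of `X` span a Lagrangian subspace. Hence
`H̃ X = X C X⁺ X = X C`, and reading this column by column against `C e_k = e_{k+1}` gives
`H̃ x_k = x_{k+1}`.
-/

lemma Jmat_mul_Jmat (n : ℕ) : Jmat n * Jmat n = -1 := by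
  simp [Jmat, fromBlocks_multiply, ← fromBlocks_one, fromBlocks_neg]

lemma isSkewHamiltonian_add_conj {n : ℕ} (A : Matrix (Fin n ⊕ Fin n) (Fin n ⊕ Fin n) ℝ) :
    IsSkewHamiltonian (A + (Jmat n)ᵀ * Aᵀ * Jmat n) := by
  have hJJ : (Jmat n)ᵀ * (Jmat n)ᵀ = -1 := by rw [← transpose_mul, Jmat_mul_Jmat]; simp
  calc (Jmat n)ᵀ * (A + (Jmat n)ᵀ * Aᵀ * Jmat n)ᵀ * Jmat n
      = (Jmat n)ᵀ * Aᵀ * Jmat n + ((Jmat n)ᵀ * (Jmat n)ᵀ) * A * (Jmat n * Jmat n) := by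
        simp only [transpose_add, transpose_mul, transpose_transpose, Matrix.mul_add,
          Matrix.add_mul, Matrix.mul_assoc]
    _ = A + (Jmat n)ᵀ * Aᵀ * Jmat n := by rw [hJJ, Jmat_mul_Jmat]; simp [add_comm]

lemma isUnit_transpose_mul_self {m n : Type*} [Fintype m] [Fintype n] [DecidableEq n]
    (A : Matrix m n ℝ) (hA : LinearIndependent ℝ A.col) : IsUnit (Aᵀ * A) := by
  simpa using (PosDef.conjTranspose_mul_self A (mulVec_injective_iff.mpr hA)).isUnit

lemma Xpinv_mul_Xfull {n : ℕ} {x : Fin n → (Fin n ⊕ Fin n) → ℝ}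
    (hLI : LinearIndependent ℝ x) : Xpinv x * Xfull x = 1 := by
  rw [Xpinv, Matrix.mul_assoc]
  exact nonsing_inv_mul _ ((isUnit_iff_isUnit_det _).mp (isUnit_transpose_mul_self _ hLI))

lemma transpose_mul_mul_apply {m n : Type*} [Fintype m] (A : Matrix m n ℝ) (B : Matrix m m ℝ)
    (i j : n) : (Aᵀ * B * A) i j = A.col i ⬝ᵥ (B *ᵥ A.col j) := by
  rw [Matrix.mul_assoc, mul_apply]
  rfl

lemma Xfull_transpose_mul_Jmat_mul_Xfull {n : ℕ} {x : Fin n → (Fin n ⊕ Fin n) → ℝ}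
    (hLag : ∀ i j : Fin n, x i ⬝ᵥ (Jmat n *ᵥ x j) = 0) :
    (Xfull x)ᵀ * Jmat n * Xfull x = 0 := by
  ext i j
  exact (transpose_mul_mul_apply _ _ i j).trans (hLag i j)

lemma Htilde_mul_Xfull {n : ℕ} {x : Fin n → (Fin n ⊕ Fin n) → ℝ}
    (hLI : LinearIndependent ℝ x) (hLag : ∀ i j : Fin n, x i ⬝ᵥ (Jmat n *ᵥ x j) = 0)
    (C : Matrix (Fin n) (Fin n) ℝ) : Htilde x C * Xfull x = Xfull x * C := by
  calc Htilde x C * Xfull x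
      = Xfull x * C * (Xpinv x * Xfull x)
        + (Jmat n)ᵀ * (Xpinv x)ᵀ * Cᵀ * ((Xfull x)ᵀ * Jmat n * Xfull x) := by
        simp only [Htilde, transpose_mul, Matrix.add_mul, Matrix.mul_assoc]
    _ = Xfull x * C := by
        rw [Xpinv_mul_Xfull hLI, Xfull_transpose_mul_Jmat_mul_Xfull hLag]; simp

lemma IsCompanion.mulVec_single_one {n : ℕ} {C : Matrix (Fin n) (Fin n) ℝ} (hC : IsCompanion C)
    (k : Fin n) (h : k.1 + 1 < n) : C *ᵥ Pi.single k 1 = Pi.single ⟨k.1 + 1, h⟩ 1 := by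
  ext i
  rw [Matrix.mulVec_single_one, col_apply, hC k h, Pi.single_apply]
  simp only [Fin.ext_iff]

lemma IsCompanion.mulVec_col {m : Type*} [Fintype m] {n : ℕ} {C : Matrix (Fin n) (Fin n) ℝ}
    (hC : IsCompanion C) {H : Matrix m m ℝ} {X : Matrix m (Fin n) ℝ} (hHX : H * X = X * C)
    (k : Fin n) (h : k.1 + 1 < n) : H *ᵥ X.col k = X.col ⟨k.1 + 1, h⟩ := by
  rw [← Matrix.mulVec_single_one, mulVec_mulVec, hHX, ← mulVec_mulVec, hC.mulVec_single_one,
    Matrix.mulVec_single_one]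

/-- For a basis of a Lagrangian subspace and a companion matrix `C`, the matrix
`H̃ = X C X⁺ + Jᵀ (X C X⁺)ᵀ J` is skew-Hamiltonian, satisfies `H̃ X = X C`, and in
particular `H̃ x_k = x_{k+1}` for `k = 1, …, n-1`. -/
theorem Htilde_skewHamiltonian {n : ℕ} (x : Fin n → (Fin n ⊕ Fin n) → ℝ)
    (hLI : LinearIndependent ℝ x)
    (hLag : ∀ i j : Fin n, x i ⬝ᵥ (Jmat n *ᵥ x j) = 0)
    (C : Matrix (Fin n) (Fin n) ℝ) (hC : IsCompanion C) :
    IsSkewHamiltonian (Htilde x C) ∧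
    Htilde x C * Xfull x = Xfull x * C ∧
    ∀ (k : Fin n) (h : k.1 + 1 < n), Htilde x C *ᵥ x k = x ⟨k.1 + 1, h⟩ := by
  have hHX := Htilde_mul_Xfull hLI hLag C
  exact ⟨isSkewHamiltonian_add_conj _, hHX, hC.mulVec_col hHX⟩
end
end
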